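/- arXiv:0911.3524 — 3 statements merged into one kernel-verified Lean document; each statement's English description precedes it below -/
import Mathlib

section
/- Let A be a symmetric cellular algebra over an integral domain R with two symmetrizing traces τ and τ', with dual bases D and d respectively. Then for all λ ∈ Λ and S, U, V ∈ M(λ): C^λ_{S,U} d^λ_{U,V} = τ(C^λ_{V,U} d^λ_{U,V}) · C^λ_{S,U} D^λ_{U,V}. Consequently the ideal I is independent of the choice of symmetrizing trace. -/
/-!
In the basis `D`, the coefficients of `d l U V` are the values `τ (C n Q P * d l U V)`. The
cellular multiplication rules kill all of them at cells of level `≤ l` except the one at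
`⟨l, (U, V)⟩`, so `d l U V ≡ τ (C l V U * d l U V) • D l U V` modulo `D`-cells of level `> l`.
Those cells are annihilated by `C l S U` on the left and by `C l V S` on the right, which gives
the first identity and its mirror image `d * C = τ (C * d) • (D * C)`.

For the ideal: `x = C l V V * D l V V` satisfies `x * x = k l • x` (this uses the symmetry of
`Φ l`), and `x' = C l V V * d l V V` satisfies `x' * x' = k' l • x'`. Since `x'` is a multiple of
`x` and `τ' x' = 1`, `k l = 0` forces `k' l = 0`, and symmetrically. So the two ideals are
generated by proportional elements over the same levels.
-/

open Submodule Set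

abbrev CellIndex {Λ : Type*} (M : Λ → Type*) := (l : Λ) × (M l × M l)

section cellSpan

variable {R A : Type*} [CommRing R] [AddCommGroup A] [Module R A] {Λ : Type*} {M : Λ → Type*}
  {C : ∀ l, M l → M l → A}

variable (R) in
def cellSpan (C : ∀ l, M l → M l → A) (s : Set (CellIndex M)) : Submodule R A :=
  span R ((fun σ => C σ.1 σ.2.1 σ.2.2) '' s)

theorem cell_mem_cellSpan {s : Set (CellIndex M)} {l : Λ} {S T : M l}
    (h : ⟨l, (S, T)⟩ ∈ s) : C l S T ∈ cellSpan R C s :=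
  subset_span (mem_image_of_mem _ h)

theorem cellSpan_mono {s t : Set (CellIndex M)} (h : s ⊆ t) :
    cellSpan R C s ≤ cellSpan R C t :=
  span_mono (image_mono h)

theorem span_setOf_eq_cellSpan (p : Λ → Prop) :
    span R {x | ∃ m, ∃ U V : M m, p m ∧ x = C m U V} =
      cellSpan R C (Sigma.fst ⁻¹' {m | p m}) := by
  congr 1
  ext x
  constructor
  · rintro ⟨m, U, V, hm, rfl⟩
    exact ⟨⟨m, (U, V)⟩, hm, rfl⟩
  · rintro ⟨⟨m, U, V⟩, hm, rfl⟩
    exact ⟨m, U, V, hm, rfl⟩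

variable {b : Module.Basis (CellIndex M) R A}

theorem mem_cellSpan_iff (hb : ∀ l S T, b ⟨l, (S, T)⟩ = C l S T) {s : Set (CellIndex M)}
    {x : A} : x ∈ cellSpan R C s ↔ ∀ σ ∉ s, b.repr x σ = 0 := by
  have : (fun σ : CellIndex M => C σ.1 σ.2.1 σ.2.2) = b :=
    funext fun ⟨l, S, T⟩ => (hb l S T).symm
  rw [cellSpan, this, b.mem_span_image, Finsupp.support_subset_iff]

theorem repr_eq_of_sub_mem_cellSpan (hb : ∀ l S T, b ⟨l, (S, T)⟩ = C l S T)
    {s : Set (CellIndex M)} {x y : A} (h : x - y ∈ cellSpan R C s) {σ : CellIndex M}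
    (hσ : σ ∉ s) : b.repr x σ = b.repr y σ := by
  simpa [sub_eq_zero] using (mem_cellSpan_iff hb).1 h σ hσ

end cellSpan

section rowCol

variable {Λ : Type*} [Preorder Λ] {M : Λ → Type*}

def colIdx (l : Λ) (T : M l) : Set (CellIndex M) :=
  Sigma.fst ⁻¹' Iio l ∪ range fun S => ⟨l, (S, T)⟩

def rowIdx (l : Λ) (S : M l) : Set (CellIndex M) :=
  Sigma.fst ⁻¹' Iio l ∪ range fun T => ⟨l, (S, T)⟩

theorem fst_le_of_mem_colIdx {l : Λ} {T : M l} {σ : CellIndex M} (h : σ ∈ colIdx l T) :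
    σ.1 ≤ l := by
  rcases h with h | ⟨S, rfl⟩
  exacts [le_of_lt h, le_rfl]

theorem fst_le_of_mem_rowIdx {l : Λ} {S : M l} {σ : CellIndex M} (h : σ ∈ rowIdx l S) :
    σ.1 ≤ l := by
  rcases h with h | ⟨T, rfl⟩
  exacts [le_of_lt h, le_rfl]

theorem mul_cell_mem_colIdx_of_sub_sum_mem {R A : Type*} [CommRing R] [Ring A] [Algebra R A]
    {C : ∀ l, M l → M l → A} {l : Λ} [Fintype (M l)] {a : A} {S T : M l} {c : M l → R}
    (h : a * C l S T - ∑ S', c S' • C l S' T ∈ cellSpan R C (Sigma.fst ⁻¹' Iio l)) :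
    a * C l S T ∈ cellSpan R C (colIdx l T) := by
  rw [← sub_add_cancel (a * C l S T) (∑ S', c S' • C l S' T)]
  exact add_mem (cellSpan_mono subset_union_left h) <|
    sum_mem fun S' _ => smul_mem _ _ (cell_mem_cellSpan (Or.inr ⟨S', rfl⟩))

end rowCol

section Cellular

variable {R A : Type*} [CommRing R] [Ring A] [Algebra R A] {Λ : Type*} [Preorder Λ]
  {M : Λ → Type*}

/-- `mul_cell_mem` is the cellular multiplication rule
`a * C l S T ≡ ∑ S', r a l S' S • C l S' T` modulo lower cells, with the coefficients
forgotten. -/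
structure IsCellularBasis (C : ∀ l, M l → M l → A) (b : Module.Basis (CellIndex M) R A)
    (ι : A →ₗ[R] A) : Prop where
  basis_apply : ∀ l S T, b ⟨l, (S, T)⟩ = C l S T
  ι_ι : ∀ x, ι (ι x) = x
  ι_mul : ∀ x y, ι (x * y) = ι y * ι x
  ι_cell_sub_mem : ∀ l S T, ι (C l S T) - C l T S ∈ cellSpan R C (Sigma.fst ⁻¹' Iio l)
  mul_cell_mem : ∀ a l S T, a * C l S T ∈ cellSpan R C (colIdx l T)

namespace IsCellularBasis

variable {C : ∀ l, M l → M l → A} {b : Module.Basis (CellIndex M) R A} {ι : A →ₗ[R] A}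
  (hC : IsCellularBasis C b ι)
include hC

theorem mul_mem_of_isLowerSet {L : Set Λ} (hL : IsLowerSet L) {x : A}
    (hx : x ∈ cellSpan R C (Sigma.fst ⁻¹' L)) (a : A) :
    a * x ∈ cellSpan R C (Sigma.fst ⁻¹' L) := by
  suffices cellSpan R C (Sigma.fst ⁻¹' L) ≤
      (cellSpan R C (Sigma.fst ⁻¹' L)).comap (LinearMap.mulLeft R a) from this hx
  refine span_le.2 ?_
  rintro _ ⟨⟨m, U, V⟩, hm, rfl⟩
  exact cellSpan_mono (fun σ hσ => hL (fst_le_of_mem_colIdx hσ) hm) (hC.mul_cell_mem a m U V)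

theorem ι_cell_mem {s : Set (CellIndex M)} {m : Λ} {U V : M m}
    (hs : Sigma.fst ⁻¹' Iio m ⊆ s) (h : ⟨m, (V, U)⟩ ∈ s) :
    ι (C m U V) ∈ cellSpan R C s := by
  rw [← sub_add_cancel (ι (C m U V)) (C m V U)]
  exact add_mem (cellSpan_mono hs (hC.ι_cell_sub_mem m U V)) (cell_mem_cellSpan h)

theorem ι_mem_of_isLowerSet {L : Set Λ} (hL : IsLowerSet L) {x : A}
    (hx : x ∈ cellSpan R C (Sigma.fst ⁻¹' L)) : ι x ∈ cellSpan R C (Sigma.fst ⁻¹' L) := by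
  suffices cellSpan R C (Sigma.fst ⁻¹' L) ≤ (cellSpan R C (Sigma.fst ⁻¹' L)).comap ι
    from this hx
  refine span_le.2 ?_
  rintro _ ⟨⟨m, U, V⟩, hm, rfl⟩
  exact hC.ι_cell_mem (fun σ hσ => hL (le_of_lt hσ) hm) hm

theorem cell_mul_mem (a : A) (l : Λ) (S T : M l) :
    C l S T * a ∈ cellSpan R C (rowIdx l S) := by
  have hcol : ι a * ι (C l S T) ∈ cellSpan R C (colIdx l S) := by
    rw [← sub_add_cancel (ι (C l S T)) (C l T S), mul_add]
    exact add_mem (cellSpan_mono subset_union_left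
      (hC.mul_mem_of_isLowerSet (isLowerSet_Iio l) (hC.ι_cell_sub_mem l S T) _))
      (hC.mul_cell_mem _ l T S)
  have hι : cellSpan R C (colIdx l S) ≤ (cellSpan R C (rowIdx l S)).comap ι := by
    refine span_le.2 ?_
    rintro _ ⟨⟨m, U, V⟩, hσ | ⟨S', hσ⟩, rfl⟩
    · exact hC.ι_cell_mem (fun σ hσ' => Or.inl (lt_trans hσ' hσ)) (Or.inl hσ)
    · cases hσ
      exact hC.ι_cell_mem subset_union_left (Or.inr ⟨S', rfl⟩)
  rw [← hC.ι_ι (C l S T * a), hC.ι_mul]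
  exact hι hcol

theorem mem_mul_of_isLowerSet {L : Set Λ} (hL : IsLowerSet L) {x : A}
    (hx : x ∈ cellSpan R C (Sigma.fst ⁻¹' L)) (a : A) :
    x * a ∈ cellSpan R C (Sigma.fst ⁻¹' L) := by
  suffices cellSpan R C (Sigma.fst ⁻¹' L) ≤
      (cellSpan R C (Sigma.fst ⁻¹' L)).comap (LinearMap.mulRight R a) from this hx
  refine span_le.2 ?_
  rintro _ ⟨⟨m, U, V⟩, hm, rfl⟩
  exact cellSpan_mono (fun σ hσ => hL (fst_le_of_mem_rowIdx hσ) hm) (hC.cell_mul_mem a m U V)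

theorem repr_smul_cell (c : R) (l : Λ) (S T : M l) :
    b.repr (c • C l S T) ⟨l, (S, T)⟩ = c := by
  simp [← hC.basis_apply]

theorem Φ_symm {Φ : ∀ l, M l → M l → R}
    (hΦ : ∀ l (S T U V : M l),
      C l S T * C l U V - Φ l T U • C l S V ∈ cellSpan R C (Sigma.fst ⁻¹' Iio l))
    (l : Λ) (T U : M l) : Φ l T U = Φ l U T := by
  -- Applying `ι` to the congruence defining `Φ l T U` yields one for `C l U U * C l T T`.
  have hι := hC.ι_mem_of_isLowerSet (isLowerSet_Iio l) (hΦ l T T U U)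
  have hswap : C l U U * C l T T - Φ l T U • C l U T =
      ι (C l T T * C l U U - Φ l T U • C l T U) -
        ((ι (C l U U) - C l U U) * ι (C l T T) + C l U U * (ι (C l T T) - C l T T) -
          Φ l T U • (ι (C l T U) - C l U T)) := by
    rw [map_sub, map_smul, hC.ι_mul]
    simp only [sub_mul, mul_sub, smul_sub]
    abel
  have hmem :
      C l U U * C l T T - Φ l T U • C l U T ∈ cellSpan R C (Sigma.fst ⁻¹' Iio l) := by
    rw [hswap]
    refine sub_mem hι (sub_mem (add_mem ?_ ?_) (smul_mem _ _ (hC.ι_cell_sub_mem l T U)))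
    · exact hC.mem_mul_of_isLowerSet (isLowerSet_Iio l) (hC.ι_cell_sub_mem l U U) _
    · exact hC.mul_mem_of_isLowerSet (isLowerSet_Iio l) (hC.ι_cell_sub_mem l T T) _
  have h₁ := repr_eq_of_sub_mem_cellSpan hC.basis_apply hmem (σ := ⟨l, (U, T)⟩) (lt_irrefl l)
  have h₂ := repr_eq_of_sub_mem_cellSpan hC.basis_apply (hΦ l U U T T)
    (σ := ⟨l, (U, T)⟩) (lt_irrefl l)
  rw [hC.repr_smul_cell] at h₁ h₂
  exact h₁.symm.trans h₂

end IsCellularBasis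

end Cellular

section Dual

variable {R A : Type*} [CommRing R] [Ring A] [Algebra R A] {Λ : Type*} [DecidableEq Λ]
  {M : Λ → Type*} [∀ l, DecidableEq (M l)]

structure IsTraceDualBasis (C D : ∀ l, M l → M l → A) (τ : A →ₗ[R] R)
    (b : Module.Basis (CellIndex M) R A) : Prop where
  trace_mul_comm : ∀ x y, τ (x * y) = τ (y * x)
  basis_apply : ∀ l S T, b ⟨l, (S, T)⟩ = D l S T
  trace_cell_mul : ∀ l m (S T : M l) (U V : M m),
    τ (C l S T * D m U V) = if (⟨l, (S, T)⟩ : CellIndex M) = ⟨m, (V, U)⟩ then 1 else 0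

namespace IsTraceDualBasis

variable {C D : ∀ l, M l → M l → A} {τ : A →ₗ[R] R} {bD : Module.Basis (CellIndex M) R A}
  (hD : IsTraceDualBasis C D τ bD)
include hD

theorem repr_eq_trace (x : A) (n : Λ) (P Q : M n) :
    bD.repr x ⟨n, (P, Q)⟩ = τ (C n Q P * x) := by
  have : Finsupp.lapply ⟨n, (P, Q)⟩ ∘ₗ bD.repr.toLinearMap =
      τ ∘ₗ LinearMap.mulLeft R (C n Q P) := by
    refine bD.ext fun ⟨l, S, T⟩ => ?_
    simp only [LinearMap.comp_apply, LinearEquiv.coe_coe, Module.Basis.repr_self,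
      Finsupp.lapply_apply, Finsupp.single_apply, LinearMap.mulLeft_apply]
    rw [hD.basis_apply, hD.trace_cell_mul]
    by_cases h : l = n
    · subst h
      simp [eq_comm, and_comm]
    · simp [h, Ne.symm h]
  exact LinearMap.congr_fun this x

variable [Preorder Λ] {bC : Module.Basis (CellIndex M) R A} {ι : A →ₗ[R] A}
  (hC : IsCellularBasis C bC ι)
include hC

theorem trace_mul_dual (x : A) (m : Λ) (X Y : M m) :
    τ (x * D m X Y) = bC.repr x ⟨m, (Y, X)⟩ := by
  have : τ ∘ₗ LinearMap.mulRight R (D m X Y) =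
      Finsupp.lapply ⟨m, (Y, X)⟩ ∘ₗ bC.repr.toLinearMap := by
    refine bC.ext fun ⟨l, S, T⟩ => ?_
    simp only [LinearMap.comp_apply, LinearMap.mulRight_apply, LinearEquiv.coe_coe,
      Module.Basis.repr_self, Finsupp.lapply_apply, Finsupp.single_apply]
    rw [hC.basis_apply, hD.trace_cell_mul]
  exact LinearMap.congr_fun this x

theorem cell_mul_dual_eq_zero {l m : Λ} (S U : M l) (X Y : M m)
    (h : ⟨m, (Y, X)⟩ ∉ colIdx l U) : C l S U * D m X Y = 0 := by
  refine bD.ext_elem fun ⟨n, P, Q⟩ => ?_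
  rw [hD.repr_eq_trace, ← mul_assoc, hD.trace_mul_dual hC, map_zero, Finsupp.zero_apply]
  exact (mem_cellSpan_iff hC.basis_apply).1 (hC.mul_cell_mem _ l S U) _ h

theorem dual_mul_cell_eq_zero {l m : Λ} (X Y : M m) (S U : M l)
    (h : ⟨m, (Y, X)⟩ ∉ rowIdx l S) : D m X Y * C l S U = 0 := by
  refine bD.ext_elem fun ⟨n, P, Q⟩ => ?_
  rw [hD.repr_eq_trace, ← mul_assoc, hD.trace_mul_comm, ← mul_assoc, hD.trace_mul_dual hC,
    map_zero, Finsupp.zero_apply]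
  exact (mem_cellSpan_iff hC.basis_apply).1 (hC.cell_mul_mem _ l S U) _ h

theorem cell_mul_eq_zero_of_mem {l : Λ} (S U : M l) {x : A}
    (hx : x ∈ cellSpan R D (Sigma.fst ⁻¹' Ioi l)) : C l S U * x = 0 := by
  suffices cellSpan R D (Sigma.fst ⁻¹' Ioi l) ≤ LinearMap.ker (LinearMap.mulLeft R (C l S U))
    from this hx
  refine span_le.2 ?_
  rintro _ ⟨⟨m, X, Y⟩, hm, rfl⟩
  exact hD.cell_mul_dual_eq_zero hC S U X Y fun h => (fst_le_of_mem_colIdx h).not_gt hm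

theorem mul_cell_eq_zero_of_mem {l : Λ} (S U : M l) {x : A}
    (hx : x ∈ cellSpan R D (Sigma.fst ⁻¹' Ioi l)) : x * C l S U = 0 := by
  suffices cellSpan R D (Sigma.fst ⁻¹' Ioi l) ≤ LinearMap.ker (LinearMap.mulRight R (C l S U))
    from this hx
  refine span_le.2 ?_
  rintro _ ⟨⟨m, X, Y⟩, hm, rfl⟩
  exact hD.dual_mul_cell_eq_zero hC X Y S U fun h => (fst_le_of_mem_rowIdx h).not_gt hm

theorem mem_mul_of_isUpperSet {L : Set Λ} (hL : IsUpperSet L) {x : A}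
    (hx : x ∈ cellSpan R D (Sigma.fst ⁻¹' L)) (a : A) :
    x * a ∈ cellSpan R D (Sigma.fst ⁻¹' L) := by
  suffices cellSpan R D (Sigma.fst ⁻¹' L) ≤
      (cellSpan R D (Sigma.fst ⁻¹' L)).comap (LinearMap.mulRight R a) from this hx
  refine span_le.2 ?_
  rintro _ ⟨⟨m, X, Y⟩, hm, rfl⟩
  refine (mem_cellSpan_iff hD.basis_apply).2 fun ⟨n, P, Q⟩ hn => ?_
  rw [LinearMap.mulRight_apply, hD.repr_eq_trace, ← mul_assoc, hD.trace_mul_comm, ← mul_assoc,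
    hD.trace_mul_dual hC]
  exact (mem_cellSpan_iff hC.basis_apply).1 (hC.mul_cell_mem a n Q P) _
    fun h => hn (hL (fst_le_of_mem_colIdx h) hm)

theorem dual_sub_smul_dual_mem {d : ∀ l, M l → M l → A} {τ' : A →ₗ[R] R}
    {bd : Module.Basis (CellIndex M) R A} (hd : IsTraceDualBasis C d τ' bd) (l : Λ) (U V : M l) :
    d l U V - τ (C l V U * d l U V) • D l U V ∈ cellSpan R D (Sigma.fst ⁻¹' Ioi l) := by
  refine (mem_cellSpan_iff hD.basis_apply).2 fun ⟨n, P, Q⟩ hn => ?_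
  rw [map_sub, map_smul, Finsupp.sub_apply, Finsupp.smul_apply, ← hD.basis_apply,
    Module.Basis.repr_self, Finsupp.single_apply, hD.repr_eq_trace]
  split_ifs with h
  · cases h
    simp
  rw [smul_zero, sub_zero]
  by_cases hcol : ⟨l, (V, U)⟩ ∈ colIdx n P
  · rcases hcol with hlt | ⟨S', hS'⟩
    · exact absurd hlt hn
    cases hS'
    rw [hD.trace_mul_comm, hd.dual_mul_cell_eq_zero hC U V Q U ?_, map_zero]
    rintro (hlt | ⟨T', hT'⟩)
    · exact lt_irrefl _ hlt
    · cases hT'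
      exact h rfl
  · rw [hd.cell_mul_dual_eq_zero hC Q P U V hcol, map_zero]

theorem cell_mul_dual_eq {d : ∀ l, M l → M l → A} {τ' : A →ₗ[R] R}
    {bd : Module.Basis (CellIndex M) R A} (hd : IsTraceDualBasis C d τ' bd) (l : Λ)
    (S U V : M l) : C l S U * d l U V = τ (C l V U * d l U V) • (C l S U * D l U V) := by
  rw [← mul_smul_comm, ← sub_eq_zero, ← mul_sub]
  exact hD.cell_mul_eq_zero_of_mem hC S U (hD.dual_sub_smul_dual_mem hC hd l U V)

theorem dual_mul_cell_eq {d : ∀ l, M l → M l → A} {τ' : A →ₗ[R] R}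
    {bd : Module.Basis (CellIndex M) R A} (hd : IsTraceDualBasis C d τ' bd) (l : Λ)
    (S U V : M l) : d l U V * C l V S = τ (C l V U * d l U V) • (D l U V * C l V S) := by
  rw [← smul_mul_assoc, ← sub_eq_zero, ← sub_mul]
  exact hD.mul_cell_eq_zero_of_mem hC V S (hD.dual_sub_smul_dual_mem hC hd l U V)

end IsTraceDualBasis

namespace IsTraceDualBasis

variable {R A : Type*} [CommRing R] [Ring A] [Algebra R A] {Λ : Type*} [DecidableEq Λ]
  [PartialOrder Λ] {M : Λ → Type*} [∀ l, DecidableEq (M l)] [∀ l, Fintype (M l)]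
  {C D : ∀ l, M l → M l → A} {τ : A →ₗ[R] R} {bD : Module.Basis (CellIndex M) R A}
  {bC : Module.Basis (CellIndex M) R A} {ι : A →ₗ[R] A}
  (hD : IsTraceDualBasis C D τ bD) (hC : IsCellularBasis C bC ι) {Φ : ∀ l, M l → M l → R}
  (hΦ : ∀ l (S T U V : M l),
    C l S T * C l U V - Φ l T U • C l S V ∈ cellSpan R C (Sigma.fst ⁻¹' Iio l))
include hD hC hΦ

theorem dual_mul_cell_sub_sum_mem (l : Λ) (T V W : M l) :
    D l T V * C l V W - ∑ Q, Φ l W Q • D l T Q ∈ cellSpan R D (Sigma.fst ⁻¹' Ioi l) := by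
  refine (mem_cellSpan_iff hD.basis_apply).2 fun ⟨n, P, Q⟩ hn => ?_
  rw [map_sub, Finsupp.sub_apply, sub_eq_zero, hD.repr_eq_trace, ← mul_assoc,
    hD.trace_mul_comm, ← mul_assoc, hD.trace_mul_dual hC, map_sum, Finsupp.finsetSum_apply]
  simp only [map_smul, ← hD.basis_apply, Module.Basis.repr_self, Finsupp.smul_apply,
    Finsupp.single_apply, smul_eq_mul, mul_ite, mul_one, mul_zero]
  by_cases h : n = l
  · subst h
    rw [repr_eq_of_sub_mem_cellSpan hC.basis_apply (hΦ n V W Q P) (lt_irrefl n)]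
    by_cases hPT : P = T
    · simp [← hC.basis_apply, hPT]
    · simp [← hC.basis_apply, Ne.symm hPT]
  · have hln : ¬ l ≤ n := fun hle => hn (lt_of_le_of_ne hle (Ne.symm h))
    rw [(mem_cellSpan_iff hC.basis_apply).1 (hC.mul_cell_mem _ n Q P) _
      fun h' => hln (fst_le_of_mem_colIdx h')]
    simp [Ne.symm h]

theorem cell_mul_dual_mul_cell_mul_dual {Ψ : ∀ l, M l → M l → R} {k : Λ → R}
    (hΨ : ∀ l (S T U V : M l),
      D l S T * D l U V - Ψ l T U • D l S V ∈ cellSpan R D (Sigma.fst ⁻¹' Ioi l))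
    (hk : ∀ l (V : M l), ∑ X, Φ l X V * Ψ l X V = k l) (l : Λ) (S T V W Z : M l) :
    C l S T * D l T V * (C l V W * D l W Z) = k l • (C l S T * D l T Z) := by
  have hkW : ∑ Q, Φ l W Q * Ψ l Q W = k l := by
    rw [← hk l W]
    exact Finset.sum_congr rfl fun Q _ => by rw [hC.Φ_symm hΦ]
  have hexp : D l T V * C l V W * D l W Z - k l • D l T Z =
      (D l T V * C l V W - ∑ Q, Φ l W Q • D l T Q) * D l W Z +
        ∑ Q, Φ l W Q • (D l T Q * D l W Z - Ψ l Q W • D l T Z) := by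
    rw [← hkW]
    simp only [sub_mul, Finset.sum_mul, smul_sub, Finset.sum_sub_distrib, smul_mul_assoc,
      Finset.sum_smul, smul_smul]
    abel
  have hmem : D l T V * C l V W * D l W Z - k l • D l T Z ∈
      cellSpan R D (Sigma.fst ⁻¹' Ioi l) := by
    rw [hexp]
    exact add_mem (hD.mem_mul_of_isUpperSet hC (isUpperSet_Ioi l)
      (hD.dual_mul_cell_sub_sum_mem hC hΦ l T V W) _)
      (sum_mem fun Q _ => smul_mem _ _ (hΨ l T Q W Z))
  have h := hD.cell_mul_eq_zero_of_mem hC S T hmem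
  rw [mul_sub, sub_eq_zero, mul_smul_comm] at h
  rw [← h]
  simp only [mul_assoc]

end IsTraceDualBasis

end Dual

theorem coeff_eq_zero_of_mul_self_eq_smul {R A : Type*} [CommRing R] [Ring A] [Algebra R A]
    (f : A →ₗ[R] R) {x y : A} {a b c : R} (hyx : y = c • x) (hx : x * x = a • x)
    (hy : y * y = b • y) (hfy : f y = 1) (ha : a = 0) : b = 0 :=
  calc b = f (b • y) := by rw [map_smul, hfy, smul_eq_mul, mul_one]
    _ = f (y * y) := by rw [hy]
    _ = 0 := by rw [hyx, smul_mul_smul_comm, hx, ha, zero_smul, smul_zero, map_zero]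

section traceIdeal

variable {R A : Type*} [CommRing R] [Ring A] [Module R A] {Λ : Type*} {M : Λ → Type*}

/-- The ideal `I` of the paper, for the dual basis `D` and the constants `k`. -/
def traceIdeal (C D : ∀ l, M l → M l → A) (k : Λ → R) : Submodule R A :=
  (⨆ l ∈ {l : Λ | k l = 0}, span R {x : A | ∃ S U V : M l, x = C l S V * D l V U}) +
    (⨆ l ∈ {l : Λ | k l = 0}, span R {x : A | ∃ S U V : M l, x = D l U V * C l V S})

theorem traceIdeal_le_of_smul {C D d : ∀ l, M l → M l → A} {k k' : Λ → R}
    (hk : ∀ l, Nonempty (M l) → k l = 0 → k' l = 0)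
    (hCD : ∀ l (S U V : M l), ∃ c : R, C l S U * D l U V = c • (C l S U * d l U V))
    (hDC : ∀ l (S U V : M l), ∃ c : R, D l U V * C l V S = c • (d l U V * C l V S)) :
    traceIdeal C D k ≤ traceIdeal C d k' := by
  refine add_le_add (iSup₂_le fun l hl => span_le.2 ?_) (iSup₂_le fun l hl => span_le.2 ?_)
  · rintro _ ⟨S, U, V, rfl⟩
    obtain ⟨c, hc⟩ := hCD l S V U
    rw [SetLike.mem_coe, hc]
    exact smul_mem _ c (mem_iSup_of_mem l (mem_iSup_of_mem (hk l ⟨V⟩ hl)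
      (subset_span ⟨S, U, V, rfl⟩)))
  · rintro _ ⟨S, U, V, rfl⟩
    obtain ⟨c, hc⟩ := hDC l S U V
    rw [SetLike.mem_coe, hc]
    exact smul_mem _ c (mem_iSup_of_mem l (mem_iSup_of_mem (hk l ⟨V⟩ hl)
      (subset_span ⟨S, U, V, rfl⟩)))

end traceIdeal

theorem IsTraceDualBasis.traceIdeal_le {R A : Type*} [CommRing R] [Ring A] [Algebra R A]
    {Λ : Type*} [DecidableEq Λ] [PartialOrder Λ] {M : Λ → Type*} [∀ l, DecidableEq (M l)]
    [∀ l, Fintype (M l)] {C D d : ∀ l, M l → M l → A} {τ τ' : A →ₗ[R] R}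
    {bC bD bd : Module.Basis (CellIndex M) R A} {ι : A →ₗ[R] A}
    (hD : IsTraceDualBasis C D τ bD) (hd : IsTraceDualBasis C d τ' bd)
    (hC : IsCellularBasis C bC ι) {Φ Ψ Ψ' : ∀ l, M l → M l → R} {k k' : Λ → R}
    (hΦ : ∀ l (S T U V : M l),
      C l S T * C l U V - Φ l T U • C l S V ∈ cellSpan R C (Sigma.fst ⁻¹' Iio l))
    (hΨ : ∀ l (S T U V : M l),
      D l S T * D l U V - Ψ l T U • D l S V ∈ cellSpan R D (Sigma.fst ⁻¹' Ioi l))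
    (hΨ' : ∀ l (S T U V : M l),
      d l S T * d l U V - Ψ' l T U • d l S V ∈ cellSpan R d (Sigma.fst ⁻¹' Ioi l))
    (hk : ∀ l (V : M l), ∑ X, Φ l X V * Ψ l X V = k l)
    (hk' : ∀ l (V : M l), ∑ X, Φ l X V * Ψ' l X V = k' l) :
    traceIdeal C D k ≤ traceIdeal C d k' := by
  refine traceIdeal_le_of_smul (fun l ⟨V⟩ hkl => ?_)
    (fun l S U V => ⟨_, hd.cell_mul_dual_eq hC hD l S U V⟩)
    (fun l S U V => ⟨_, hd.dual_mul_cell_eq hC hD l S U V⟩)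
  exact coeff_eq_zero_of_mul_self_eq_smul τ' (hD.cell_mul_dual_eq hC hd l V V V)
    (hD.cell_mul_dual_mul_cell_mul_dual hC hΦ hΨ hk l V V V V V)
    (hd.cell_mul_dual_mul_cell_mul_dual hC hΦ hΨ' hk' l V V V V V)
    (by simp [hd.trace_cell_mul]) hkl

theorem I_independent_of_trace_general
    {R A : Type*} [CommRing R] [Ring A] [Algebra R A]
    {Λ : Type*} [PartialOrder Λ] [DecidableEq Λ]
    {M : Λ → Type*} [∀ l, Fintype (M l)] [∀ l, DecidableEq (M l)]
    (C D : ∀ l, M l → M l → A)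
    (bC : Module.Basis ((l : Λ) × (M l × M l)) R A)
    (hbC : ∀ l S T, bC ⟨l, (S, T)⟩ = C l S T)
    (ι : A →ₗ[R] A)
    (hι2 : ∀ x, ι (ι x) = x)
    (hιmul : ∀ x y, ι (x * y) = ι y * ι x)
    (hC2 : ∀ l (S T : M l), ι (C l S T) - C l T S ∈
      Submodule.span R {x | ∃ m, ∃ U V : M m, m < l ∧ x = C m U V})
    (r : A → ∀ l, M l → M l → R)
    (hC3 : ∀ (a : A) l (S T : M l), a * C l S T - ∑ S', r a l S' S • C l S' T ∈
      Submodule.span R {x | ∃ m, ∃ U V : M m, m < l ∧ x = C m U V})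
    (τ : A →ₗ[R] R)
    (hτtr : ∀ x y, τ (x * y) = τ (y * x))
    (bD : Module.Basis ((l : Λ) × (M l × M l)) R A)
    (hbD : ∀ l S T, bD ⟨l, (S, T)⟩ = D l S T)
    (hdual : ∀ l m (S T : M l) (U V : M m),
      τ (C l S T * D m U V) =
        if (⟨l, (S, T)⟩ : (l : Λ) × (M l × M l)) = ⟨m, (V, U)⟩ then 1 else 0)
    (d : ∀ l, M l → M l → A)
    (τ' : A →ₗ[R] R)
    (hτ'tr : ∀ x y, τ' (x * y) = τ' (y * x))
    (bd : Module.Basis ((l : Λ) × (M l × M l)) R A)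
    (hbd : ∀ l S T, bd ⟨l, (S, T)⟩ = d l S T)
    (hdual' : ∀ l m (S T : M l) (U V : M m),
      τ' (C l S T * d m U V) =
        if (⟨l, (S, T)⟩ : (l : Λ) × (M l × M l)) = ⟨m, (V, U)⟩ then 1 else 0)
    (Φ Ψ Ψ' : ∀ l, M l → M l → R)
    (hΦ : ∀ l (S T U V : M l), C l S T * C l U V - Φ l T U • C l S V ∈
      Submodule.span R {x | ∃ m, ∃ U' V' : M m, m < l ∧ x = C m U' V'})
    (hΨ : ∀ l (S T U V : M l), D l S T * D l U V - Ψ l T U • D l S V ∈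
      Submodule.span R {x | ∃ m, ∃ U' V' : M m, l < m ∧ x = D m U' V'})
    (hΨ' : ∀ l (S T U V : M l), d l S T * d l U V - Ψ' l T U • d l S V ∈
      Submodule.span R {x | ∃ m, ∃ U' V' : M m, l < m ∧ x = d m U' V'})
    (k k' : Λ → R)
    (hk : ∀ l (V : M l), ∑ X : M l, Φ l X V * Ψ l X V = k l)
    (hk' : ∀ l (V : M l), ∑ X : M l, Φ l X V * Ψ' l X V = k' l) :
    (∀ l (S U V : M l),
      C l S U * d l U V = τ (C l V U * d l U V) • (C l S U * D l U V)) ∧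
    ((⨆ l ∈ {l : Λ | k l = 0},
        Submodule.span R {x : A | ∃ S U V : M l, x = C l S V * D l V U}) +
      (⨆ l ∈ {l : Λ | k l = 0},
        Submodule.span R {x : A | ∃ S U V : M l, x = D l U V * C l V S}) =
     (⨆ l ∈ {l : Λ | k' l = 0},
        Submodule.span R {x : A | ∃ S U V : M l, x = C l S V * d l V U}) +
      (⨆ l ∈ {l : Λ | k' l = 0},
        Submodule.span R {x : A | ∃ S U V : M l, x = d l U V * C l V S})) := by
  have hC : IsCellularBasis C bC ι :=
    ⟨hbC, hι2, hιmul, fun l S T => (span_setOf_eq_cellSpan _).le (hC2 l S T),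
      fun a l S T =>
        mul_cell_mem_colIdx_of_sub_sum_mem ((span_setOf_eq_cellSpan _).le (hC3 a l S T))⟩
  have hD : IsTraceDualBasis C D τ bD := ⟨hτtr, hbD, hdual⟩
  have hd : IsTraceDualBasis C d τ' bd := ⟨hτ'tr, hbd, hdual'⟩
  have hΦ := fun l S T U V => (span_setOf_eq_cellSpan (fun m => m < l)).le (hΦ l S T U V)
  have hΨ := fun l S T U V => (span_setOf_eq_cellSpan (fun m => l < m)).le (hΨ l S T U V)
  have hΨ' := fun l S T U V => (span_setOf_eq_cellSpan (fun m => l < m)).le (hΨ' l S T U V)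
  exact ⟨hD.cell_mul_dual_eq hC hd, le_antisymm (hD.traceIdeal_le hd hC hΦ hΨ hΨ' hk hk')
    (hd.traceIdeal_le hD hC hΦ hΨ' hΨ hk' hk)⟩

/-- Theorem 4.2(2): if `τ` and `τ′` are two symmetrizing traces with dual bases `D`
and `d`, then `C l S U * d l U V = τ (C l V U * d l U V) • (C l S U * D l U V)`;
consequently the ideal `I` is independent of the choice of symmetrizing trace. -/
theorem I_independent_of_trace
    {R A : Type*} [CommRing R] [Ring A] [Algebra R A]
    {Λ : Type*} [PartialOrder Λ] [Fintype Λ] [DecidableEq Λ]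
    {M : Λ → Type*} [∀ l, Fintype (M l)] [∀ l, DecidableEq (M l)]
    (C D : ∀ l, M l → M l → A)
    (bC : Module.Basis ((l : Λ) × (M l × M l)) R A)
    (hbC : ∀ l S T, bC ⟨l, (S, T)⟩ = C l S T)
    (ι : A →ₗ[R] A)
    (hι2 : ∀ x, ι (ι x) = x)
    (hιmul : ∀ x y, ι (x * y) = ι y * ι x)
    (hC2 : ∀ l (S T : M l), ι (C l S T) - C l T S ∈
      Submodule.span R {x | ∃ m, ∃ U V : M m, m < l ∧ x = C m U V})
    (r : A → ∀ l, M l → M l → R)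
    (hC3 : ∀ (a : A) l (S T : M l), a * C l S T - ∑ S', r a l S' S • C l S' T ∈
      Submodule.span R {x | ∃ m, ∃ U V : M m, m < l ∧ x = C m U V})
    (τ : A →ₗ[R] R)
    (hτtr : ∀ x y, τ (x * y) = τ (y * x))
    (bD : Module.Basis ((l : Λ) × (M l × M l)) R A)
    (hbD : ∀ l S T, bD ⟨l, (S, T)⟩ = D l S T)
    (hdual : ∀ l m (S T : M l) (U V : M m),
      τ (C l S T * D m U V) =
        if (⟨l, (S, T)⟩ : (l : Λ) × (M l × M l)) = ⟨m, (V, U)⟩ then 1 else 0)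
    [IsDomain R]
    (d : ∀ l, M l → M l → A)
    (τ' : A →ₗ[R] R)
    (hτ'tr : ∀ x y, τ' (x * y) = τ' (y * x))
    (bd : Module.Basis ((l : Λ) × (M l × M l)) R A)
    (hbd : ∀ l S T, bd ⟨l, (S, T)⟩ = d l S T)
    (hdual' : ∀ l m (S T : M l) (U V : M m),
      τ' (C l S T * d m U V) =
        if (⟨l, (S, T)⟩ : (l : Λ) × (M l × M l)) = ⟨m, (V, U)⟩ then 1 else 0)
    (Φ Ψ Ψ' : ∀ l, M l → M l → R)
    (hΦ : ∀ l (S T U V : M l), C l S T * C l U V - Φ l T U • C l S V ∈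
      Submodule.span R {x | ∃ m, ∃ U' V' : M m, m < l ∧ x = C m U' V'})
    (hΨ : ∀ l (S T U V : M l), D l S T * D l U V - Ψ l T U • D l S V ∈
      Submodule.span R {x | ∃ m, ∃ U' V' : M m, l < m ∧ x = D m U' V'})
    (hΨ' : ∀ l (S T U V : M l), d l S T * d l U V - Ψ' l T U • d l S V ∈
      Submodule.span R {x | ∃ m, ∃ U' V' : M m, l < m ∧ x = d m U' V'})
    (k k' : Λ → R)
    (hk : ∀ l (V : M l), ∑ X : M l, Φ l X V * Ψ l X V = k l)
    (hk' : ∀ l (V : M l), ∑ X : M l, Φ l X V * Ψ' l X V = k' l) :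
    (∀ l (S U V : M l),
      C l S U * d l U V = τ (C l V U * d l U V) • (C l S U * D l U V)) ∧
    ((⨆ l ∈ {l : Λ | k l = 0},
        Submodule.span R {x : A | ∃ S U V : M l, x = C l S V * D l V U}) +
      (⨆ l ∈ {l : Λ | k l = 0},
        Submodule.span R {x : A | ∃ S U V : M l, x = D l U V * C l V S}) =
     (⨆ l ∈ {l : Λ | k' l = 0},
        Submodule.span R {x : A | ∃ S U V : M l, x = C l S V * d l V U}) +
      (⨆ l ∈ {l : Λ | k' l = 0},
        Submodule.span R {x : A | ∃ S U V : M l, x = d l U V * C l V S})) :=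
  I_independent_of_trace_general C D bC hbC ι hι2 hιmul hC2 r hC3 τ hτtr bD hbD hdual d τ' hτ'tr bd
    hbd hdual' Φ Ψ Ψ' hΦ hΨ hΨ' k k' hk hk'
end

section
/- Let R be an integral domain and A a symmetric cellular algebra. If λ is the minimal element of Λ and rad λ ≠ 0, then the R-span of {C^λ_{S,T} | S,T ∈ M(λ)} is contained in the Jacobson radical of A. -/
/-!
At the minimal level `l` the cell relations hold exactly, so for `v` in the radical of `Φ l`
the elements `w S = ∑ T, v T • C l S T` satisfy `w S * C l U V = 0` and
`C l U V * w S = Φ l V S • w U`. If some `Φ l V S` were nonzero, symmetry of `τ` would give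
`Φ l V S * τ (w U) = τ (w S * C l U V) = 0`, so `τ` vanishes on every `w U`; but pairing with
the dual basis recovers the coordinates of `v` as `v T = τ (D l T S * w S)`, a combination of
the `τ (w X)`, forcing `v = 0`. Hence `Φ l = 0`, all products of cell basis elements at level
`l` vanish, and `(a * C l S T) ^ 2 = 0` for every `a`, which puts `C l S T` in the radical.
-/

theorem Ideal.mem_jacobson_bot_of_isNilpotent_mul {A : Type*} [Ring A] {x : A}
    (h : ∀ y, IsNilpotent (y * x)) : x ∈ Ideal.jacobson (⊥ : Ideal A) :=
  Ideal.mem_jacobson_iff.2 fun y => by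
    obtain ⟨z, hz⟩ := (h y).isUnit_add_one.exists_left_inv
    exact ⟨z, by rw [Ideal.mem_bot, mul_assoc, ← hz, mul_add, mul_one, sub_self]⟩

theorem eq_of_sub_mem_span_lt_of_isBot {R A Λ : Type*} [CommRing R] [AddCommGroup A]
    [Module R A] [Preorder Λ] {M : Λ → Type*} (C : ∀ l, M l → M l → A) {l : Λ}
    (hl : IsBot l) {x y : A}
    (h : x - y ∈ Submodule.span R {x | ∃ m, ∃ U V : M m, m < l ∧ x = C m U V}) : x = y := by
  have hempty : {x : A | ∃ m, ∃ U V : M m, m < l ∧ x = C m U V} = ∅ :=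
    Set.eq_empty_iff_forall_notMem.2 fun _ ⟨m, _, _, hm, _⟩ => hm.not_ge (hl m)
  rwa [hempty, Submodule.span_empty, Submodule.mem_bot, sub_eq_zero] at h

namespace MinimalCell

variable {R A n : Type*} [CommRing R] [Ring A] [Algebra R A] [Fintype n]
  {C D : n → n → A} {Φ : n → n → R} {r : A → n → n → R} {τ : A →ₗ[R] R}

def row (C : n → n → A) (v : n → R) (S : n) : A := ∑ T, v T • C S T

theorem row_mul_eq_zero (hCC : ∀ S T U V, C S T * C U V = Φ T U • C S V) {v : n → R}
    (hv : ∀ T, ∑ S, v S * Φ S T = 0) (S U V : n) : row C v S * C U V = 0 := by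
  simp only [row, Finset.sum_mul, smul_mul_assoc, hCC, smul_smul, ← Finset.sum_smul, hv,
    zero_smul]

theorem mul_row (hCC : ∀ S T U V, C S T * C U V = Φ T U • C S V) (v : n → R) (U V S : n) :
    C U V * row C v S = Φ V S • row C v U := by
  simp only [row, Finset.mul_sum, Finset.smul_sum]
  exact Finset.sum_congr rfl fun T _ => by rw [mul_smul_comm, hCC, smul_comm]

theorem mul_row_eq_sum (hmul : ∀ a S T, a * C S T = ∑ S', r a S' S • C S' T)
    (v : n → R) (a : A) (S : n) : a * row C v S = ∑ X, r a X S • row C v X := by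
  simp only [row, Finset.mul_sum, mul_smul_comm, hmul, Finset.smul_sum]
  rw [Finset.sum_comm]
  simp only [smul_comm (v _)]

theorem trace_mul_row [DecidableEq n] (hτ : ∀ x y, τ (x * y) = τ (y * x))
    (hdual : ∀ S T U V, τ (C S T * D U V) = if S = V ∧ T = U then 1 else 0)
    (v : n → R) (T S : n) : τ (D T S * row C v S) = v T := by
  rw [hτ]
  simp [row, Finset.sum_mul, hdual]

theorem trace_row_eq_zero [NoZeroDivisors R] (hτ : ∀ x y, τ (x * y) = τ (y * x))
    (hCC : ∀ S T U V, C S T * C U V = Φ T U • C S V)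
    {v : n → R} (hv : ∀ T, ∑ S, v S * Φ S T = 0) {V S : n} (hVS : Φ V S ≠ 0) (U : n) :
    τ (row C v U) = 0 := by
  have : Φ V S * τ (row C v U) = 0 := by
    rw [← smul_eq_mul, ← map_smul, ← mul_row hCC, hτ, row_mul_eq_zero hCC hv, map_zero]
  exact (mul_eq_zero.1 this).resolve_left hVS

theorem form_eq_zero_of_degenerate [NoZeroDivisors R] [DecidableEq n]
    (hmul : ∀ a S T, a * C S T = ∑ S', r a S' S • C S' T)
    (hCC : ∀ S T U V, C S T * C U V = Φ T U • C S V)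
    (hτ : ∀ x y, τ (x * y) = τ (y * x))
    (hdual : ∀ S T U V, τ (C S T * D U V) = if S = V ∧ T = U then 1 else 0)
    {v : n → R} (hv0 : v ≠ 0) (hv : ∀ T, ∑ S, v S * Φ S T = 0) : Φ = 0 := by
  by_contra hΦ
  obtain ⟨V, S, hVS⟩ : ∃ V S, Φ V S ≠ 0 := by
    by_contra! h
    exact hΦ (funext₂ h)
  refine hv0 (funext fun T => ?_)
  rw [Pi.zero_apply, ← trace_mul_row hτ hdual v T S, mul_row_eq_sum hmul, map_sum]
  exact Finset.sum_eq_zero fun X _ => by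
    rw [map_smul, trace_row_eq_zero hτ hCC hv hVS X, smul_zero]

theorem mem_jacobson_bot_of_mul_eq_zero (hmul : ∀ a S T, a * C S T = ∑ S', r a S' S • C S' T)
    (hCC : ∀ S T U V, C S T * C U V = 0) (S T : n) :
    C S T ∈ Ideal.jacobson (⊥ : Ideal A) := by
  refine Ideal.mem_jacobson_bot_of_isNilpotent_mul fun y => ⟨2, ?_⟩
  rw [sq, mul_assoc, hmul y S T, Finset.mul_sum]
  simp only [mul_smul_comm, hCC, smul_zero, Finset.sum_const_zero, mul_zero]

end MinimalCell

theorem minimal_cell_span_in_radical_general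
    {R A : Type*} [CommRing R] [Ring A] [Algebra R A]
    {Λ : Type*} [PartialOrder Λ] [DecidableEq Λ]
    {M : Λ → Type*} [∀ l, Fintype (M l)] [∀ l, DecidableEq (M l)]
    (C D : ∀ l, M l → M l → A)
    (r : A → ∀ l, M l → M l → R)
    (hC3 : ∀ (a : A) l (S T : M l), a * C l S T - ∑ S', r a l S' S • C l S' T ∈
      Submodule.span R {x | ∃ m, ∃ U V : M m, m < l ∧ x = C m U V})
    (τ : A →ₗ[R] R)
    (hτtr : ∀ x y, τ (x * y) = τ (y * x))
    (hdual : ∀ l m (S T : M l) (U V : M m),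
      τ (C l S T * D m U V) =
        if (⟨l, (S, T)⟩ : (l : Λ) × (M l × M l)) = ⟨m, (V, U)⟩ then 1 else 0)
    (Φ : ∀ l, M l → M l → R)
    (hΦ : ∀ l (S T U V : M l), C l S T * C l U V - Φ l T U • C l S V ∈
      Submodule.span R {x | ∃ m, ∃ U' V' : M m, m < l ∧ x = C m U' V'})
    [IsDomain R]
    (l : Λ) (hmin : ∀ m : Λ, l ≤ m)
    (hrad : ∃ v : M l → R, v ≠ 0 ∧ ∀ T : M l, ∑ S : M l, v S * Φ l S T = 0) :
    ∀ x ∈ Submodule.span R {x : A | ∃ S T : M l, x = C l S T},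
      x ∈ Ideal.jacobson (⊥ : Ideal A) := by
  obtain ⟨v, hv0, hv⟩ := hrad
  have hmul : ∀ a (S T : M l), a * C l S T = ∑ S', r a l S' S • C l S' T := fun a S T =>
    eq_of_sub_mem_span_lt_of_isBot C hmin (hC3 a l S T)
  have hCC : ∀ S T U V : M l, C l S T * C l U V = Φ l T U • C l S V := fun S T U V =>
    eq_of_sub_mem_span_lt_of_isBot C hmin (hΦ l S T U V)
  have hdual_l : ∀ S T U V : M l, τ (C l S T * D l U V) = if S = V ∧ T = U then 1 else 0 := by
    intro S T U V
    simp [hdual]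
  have hΦ0 := MinimalCell.form_eq_zero_of_degenerate hmul hCC hτtr hdual_l hv0 hv
  have hCC0 : ∀ S T U V : M l, C l S T * C l U V = 0 := fun S T U V => by
    rw [hCC, hΦ0, Pi.zero_apply, Pi.zero_apply, zero_smul]
  have hspan : Submodule.span R {x : A | ∃ S T : M l, x = C l S T} ≤
      (Ideal.jacobson (⊥ : Ideal A)).restrictScalars R := Submodule.span_le.2 <| by
    rintro _ ⟨S, T, rfl⟩
    exact MinimalCell.mem_jacobson_bot_of_mul_eq_zero hmul hCC0 S T
  exact fun x hx => hspan hx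

/-- Corollary 4.3: over an integral domain, if `l` is the minimal element of `Λ` and
the radical of the bilinear form of the cell module `W(l)` is nonzero, then the span of
`{C l S T}` is contained in the Jacobson radical of `A`. -/
theorem minimal_cell_span_in_radical
    {R A : Type*} [CommRing R] [Ring A] [Algebra R A]
    {Λ : Type*} [PartialOrder Λ] [Fintype Λ] [DecidableEq Λ]
    {M : Λ → Type*} [∀ l, Fintype (M l)] [∀ l, DecidableEq (M l)]
    (C D : ∀ l, M l → M l → A)
    (bC : Module.Basis ((l : Λ) × (M l × M l)) R A)
    (hbC : ∀ l S T, bC ⟨l, (S, T)⟩ = C l S T)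
    (ι : A →ₗ[R] A)
    (hι2 : ∀ x, ι (ι x) = x)
    (hιmul : ∀ x y, ι (x * y) = ι y * ι x)
    (hC2 : ∀ l (S T : M l), ι (C l S T) - C l T S ∈
      Submodule.span R {x | ∃ m, ∃ U V : M m, m < l ∧ x = C m U V})
    (r : A → ∀ l, M l → M l → R)
    (hC3 : ∀ (a : A) l (S T : M l), a * C l S T - ∑ S', r a l S' S • C l S' T ∈
      Submodule.span R {x | ∃ m, ∃ U V : M m, m < l ∧ x = C m U V})
    (τ : A →ₗ[R] R)
    (hτtr : ∀ x y, τ (x * y) = τ (y * x))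
    (bD : Module.Basis ((l : Λ) × (M l × M l)) R A)
    (hbD : ∀ l S T, bD ⟨l, (S, T)⟩ = D l S T)
    (hdual : ∀ l m (S T : M l) (U V : M m),
      τ (C l S T * D m U V) =
        if (⟨l, (S, T)⟩ : (l : Λ) × (M l × M l)) = ⟨m, (V, U)⟩ then 1 else 0)
    (Φ Ψ : ∀ l, M l → M l → R)
    (hΦ : ∀ l (S T U V : M l), C l S T * C l U V - Φ l T U • C l S V ∈
      Submodule.span R {x | ∃ m, ∃ U' V' : M m, m < l ∧ x = C m U' V'})
    (hΨ : ∀ l (S T U V : M l), D l S T * D l U V - Ψ l T U • D l S V ∈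
      Submodule.span R {x | ∃ m, ∃ U' V' : M m, l < m ∧ x = D m U' V'})
    [IsDomain R]
    (l : Λ) (hmin : ∀ m : Λ, l ≤ m)
    (hrad : ∃ v : M l → R, v ≠ 0 ∧ ∀ T : M l, ∑ S : M l, v S * Φ l S T = 0) :
    ∀ x ∈ Submodule.span R {x : A | ∃ S T : M l, x = C l S T},
      x ∈ Ideal.jacobson (⊥ : Ideal A) :=
  minimal_cell_span_in_radical_general C D r hC3 τ hτtr hdual Φ hΦ l hmin hrad
end

section
/- Let A be a finite-dimensional symmetric cellular algebra over a field K. Then A is semisimple if and only if the set {C^λ_{S,T} D^λ_{T,T} | λ ∈ Λ, S, T ∈ M(λ)} is a K-basis of A. -/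
/-!
The trace formula `τ (a * (C l S T * D l T S')) = r a l S' S` shows that the structure constants
`a ↦ (r a l)_l` of the cell modules form an algebra map `ρ : A → ∏ l, Mat_{M l}(R)`, and that
`ρ x = 0` iff `x` is `τ`-orthogonal to every `C l S T * D l T T`. As `(x, y) ↦ τ (x * y)` is
nondegenerate, these products span `A` iff `ρ` is injective, and then they form a basis by counting
dimensions. An injective `ρ` is an isomorphism onto a semisimple algebra. Conversely, an element of
`ker ρ` maps every cell into lower cells, so `ker ρ` is a nil ideal; it lies in the Jacobson
radical, which vanishes when `A` is semisimple.
-/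

open Module Submodule

theorem span_range_eq_top_iff_of_separatingLeft {K V ι : Type*} [Field K] [AddCommGroup V]
    [Module K V] [FiniteDimensional K V] {B : V →ₗ[K] V →ₗ[K] K} (hB : B.SeparatingLeft)
    (v : ι → V) : span K (Set.range v) = ⊤ ↔ ∀ x, (∀ i, B x (v i) = 0) → x = 0 := by
  refine ⟨fun hv x hx => hB x fun y => ?_, fun h => ?_⟩
  · rw [LinearMap.ext_on_range hv (g := 0) hx, LinearMap.zero_apply]
  · by_contra hne
    obtain ⟨φ, hφ, hφv⟩ :=
      (span K (Set.range v)).exists_le_ker_of_lt_top (lt_top_iff_ne_top.2 hne)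
    have hB_surj : Function.Surjective B :=
      (LinearMap.injective_iff_surjective_of_finrank_eq_finrank
        Subspace.dual_finrank_eq.symm).mp
        (LinearMap.ker_eq_bot.mp (LinearMap.separatingLeft_iff_ker_eq_bot.mp hB))
    obtain ⟨x, rfl⟩ := hB_surj φ
    exact hφ (by rw [h x fun i => hφv (subset_span ⟨i, rfl⟩), map_zero])

theorem eq_zero_of_forall_isNilpotent_mul_left {A : Type*} [Ring A] [IsSemisimpleRing A]
    {x : A} (hx : ∀ y, IsNilpotent (y * x)) : x = 0 := by
  have : x ∈ Ideal.jacobson (⊥ : Ideal A) := Ideal.mem_jacobson_iff.mpr fun y =>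
    ⟨↑(hx y).isUnit_add_one.unit⁻¹, by
      rw [Ideal.mem_bot, mul_assoc, ← mul_add_one,
        Units.inv_mul_of_eq (hx y).isUnit_add_one.unit_spec, sub_self]⟩
  rwa [Ideal.jacobson_bot, IsSemisimpleRing.jacobson_eq_bot, Ideal.mem_bot] at this

theorem IsSemisimpleRing.of_injective_algHom {K A B : Type*} [Field K] [Ring A] [Ring B]
    [Algebra K A] [Algebra K B] [FiniteDimensional K A] [FiniteDimensional K B]
    [IsSemisimpleRing B] (f : A →ₐ[K] B) (hf : Function.Injective f)
    (hdim : finrank K A = finrank K B) : IsSemisimpleRing A :=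
  (AlgEquiv.ofBijective f ⟨hf, (LinearMap.injective_iff_surjective_of_finrank_eq_finrank
    (f := f.toLinearMap) hdim).mp hf⟩).toRingEquiv.symm.isSemisimpleRing

theorem exists_pow_mul_eq_zero_of_mem_span {R A : Type*} [CommSemiring R] [Semiring A]
    [Algebra R A] {x y : A} {s : Set A} (hs : ∀ z ∈ s, ∃ k, x ^ k * z = 0)
    (hy : y ∈ span R s) : ∃ k, x ^ k * y = 0 := by
  induction hy using span_induction with
  | mem z hz => exact hs z hz
  | zero => exact ⟨0, mul_zero _⟩
  | add u v _ _ hu hv =>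
    obtain ⟨a, ha⟩ := hu
    obtain ⟨b, hb⟩ := hv
    refine ⟨a + b, ?_⟩
    rw [mul_add, pow_add, mul_assoc, mul_assoc, hb, ← mul_assoc, pow_mul_comm, mul_assoc, ha,
      mul_zero, mul_zero, add_zero]
  | smul c u _ hu =>
    obtain ⟨k, hk⟩ := hu
    exact ⟨k, by rw [mul_smul_comm, hk, smul_zero]⟩

namespace CellularAlgebra

variable {R A Λ : Type*} [Ring A] {M : Λ → Type*}

section CommRing

variable [CommRing R] [Algebra R A] {C D : ∀ l, M l → M l → A} {τ : A →ₗ[R] R}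

variable (C D τ) in
/-- Defined through `τ` rather than through the structure constants `r` so that linearity is
automatic; `cellRep_apply` identifies the entry `(i, j)` at `l` with `r a l i j`. -/
def cellRep : A →ₗ[R] ∀ l, Matrix (M l) (M l) R where
  toFun a l := Matrix.of fun i j => τ (a * (C l j i * D l i i))
  map_add' a b := by ext; simp [add_mul]
  map_smul' c a := by ext; simp

theorem cellRep_eq_zero_iff {x : A} : cellRep C D τ x = 0 ↔
    ∀ t : (l : Λ) × (M l × M l), τ (x * (C t.1 t.2.1 t.2.2 * D t.1 t.2.2 t.2.2)) = 0 := by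
  refine ⟨fun hx ⟨l, S, T⟩ => congr_fun₃ hx l T S, fun hx => ?_⟩
  ext l i j
  exact hx ⟨l, j, i⟩

section DualBasis

variable [DecidableEq Λ] [∀ l, DecidableEq (M l)]

variable (C D τ) in
def IsDualBasis : Prop :=
  ∀ l m (S T : M l) (U V : M m), τ (C l S T * D m U V) =
    if (⟨l, (S, T)⟩ : (l : Λ) × (M l × M l)) = ⟨m, (V, U)⟩ then 1 else 0

theorem basis_repr_eq_trace_mul_dual (bC : Basis ((l : Λ) × (M l × M l)) R A)
    (hbC : ∀ l S T, bC ⟨l, (S, T)⟩ = C l S T) (hdual : IsDualBasis C D τ) (x : A) (m : Λ)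
    (U V : M m) : bC.repr x ⟨m, (V, U)⟩ = τ (x * D m U V) := by
  have : bC.coord ⟨m, (V, U)⟩ = τ ∘ₗ LinearMap.mulRight R (D m U V) :=
    bC.ext fun ⟨l, S, T⟩ => by
      rw [Basis.coord_apply, Basis.repr_self, LinearMap.comp_apply, LinearMap.mulRight_apply, hbC,
        hdual l m, Finsupp.single_apply]
  exact LinearMap.congr_fun this x

theorem separatingLeft_traceForm (bC : Basis ((l : Λ) × (M l × M l)) R A)
    (hbC : ∀ l S T, bC ⟨l, (S, T)⟩ = C l S T) (hdual : IsDualBasis C D τ) :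
    ((LinearMap.mul R A).compr₂ τ).SeparatingLeft := by
  intro x hx
  refine bC.ext_elem fun ⟨m, V, U⟩ => ?_
  rw [basis_repr_eq_trace_mul_dual bC hbC hdual, map_zero, Finsupp.zero_apply]
  exact hx _

end DualBasis

variable [Preorder Λ]

variable (R C) in
def lowerCells (l : Λ) : Submodule R A :=
  span R {x | ∃ m, ∃ U V : M m, m < l ∧ x = C m U V}

theorem cell_mem_lowerCells {m l : Λ} (h : m < l) (U V : M m) : C m U V ∈ lowerCells R C l :=
  subset_span ⟨m, U, V, h, rfl⟩

theorem lowerCells_mono {m l : Λ} (h : m < l) : lowerCells R C m ≤ lowerCells R C l :=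
  span_le.mpr fun _ ⟨_, U, V, hm, hx⟩ => hx ▸ cell_mem_lowerCells (hm.trans h) U V

theorem isNilpotent_of_mul_cell_mem_lowerCells [WellFoundedLT Λ]
    (hspan : span R (Set.range fun t : (l : Λ) × (M l × M l) => C t.1 t.2.1 t.2.2) = ⊤) {x : A}
    (hx : ∀ l (S T : M l), x * C l S T ∈ lowerCells R C l) : IsNilpotent x := by
  have hcell : ∀ l (S T : M l), ∃ k, x ^ k * C l S T = 0 := by
    intro l
    induction l using WellFoundedLT.induction with
    | _ l ih =>
      intro S T
      obtain ⟨k, hk⟩ := exists_pow_mul_eq_zero_of_mem_span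
        (by rintro _ ⟨m, U, V, hm, rfl⟩; exact ih m hm U V) (hx l S T)
      exact ⟨k + 1, by rw [pow_succ, mul_assoc, hk]⟩
  obtain ⟨k, hk⟩ := exists_pow_mul_eq_zero_of_mem_span
    (by rintro _ ⟨t, rfl⟩; exact hcell _ _ _) (hspan ▸ mem_top : (1 : A) ∈ span R _)
  exact ⟨k, by rwa [mul_one] at hk⟩

theorem trace_mul_dual_eq_zero [DecidableEq Λ] [∀ l, DecidableEq (M l)]
    (hdual : IsDualBasis C D τ) {l : Λ} {y : A} (hy : y ∈ lowerCells R C l) (T S : M l) :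
    τ (y * D l T S) = 0 := by
  induction hy using span_induction with
  | mem z hz =>
    obtain ⟨m, U, V, hm, rfl⟩ := hz
    rw [hdual, if_neg fun h => hm.ne (congrArg Sigma.fst h)]
  | zero => rw [zero_mul, map_zero]
  | add u v _ _ hu hv => rw [add_mul, map_add, hu, hv, add_zero]
  | smul c u _ hu => rw [smul_mul_assoc, map_smul, hu, smul_zero]

variable [∀ l, Fintype (M l)] {r : A → ∀ l, M l → M l → R}

variable (C r) in
/-- Axiom (C3) of a cellular algebra. -/
def IsCellularMul : Prop :=
  ∀ (a : A) l (S T : M l), a * C l S T - ∑ S', r a l S' S • C l S' T ∈ lowerCells R C l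

theorem mul_mem_lowerCells (hC : IsCellularMul C r) (a : A) {l : Λ} {y : A}
    (hy : y ∈ lowerCells R C l) : a * y ∈ lowerCells R C l := by
  induction hy using span_induction with
  | mem z hz =>
    obtain ⟨m, U, V, hm, rfl⟩ := hz
    rw [← sub_add_cancel (a * C m U V) (∑ S', r a m S' U • C m S' V)]
    exact add_mem (lowerCells_mono hm (hC a m U V))
      (sum_mem fun S' _ => smul_mem _ _ (cell_mem_lowerCells hm S' V))
  | zero => rw [mul_zero]; exact zero_mem _
  | add u v _ _ hu hv => rw [mul_add]; exact add_mem hu hv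
  | smul c u _ hu => rw [mul_smul_comm]; exact smul_mem _ _ hu

variable [DecidableEq Λ] [∀ l, DecidableEq (M l)]

theorem trace_mul_cell_mul_dual (hC : IsCellularMul C r) (hdual : IsDualBasis C D τ)
    (a : A) {l : Λ} (S T S' : M l) : τ (a * (C l S T * D l T S')) = r a l S' S := by
  have hlower := trace_mul_dual_eq_zero hdual (hC a l S T) T S'
  rw [sub_mul, map_sub, sub_eq_zero, Finset.sum_mul, map_sum] at hlower
  rw [← mul_assoc, hlower]
  simp [hdual l l]

theorem structConst_mul (hC : IsCellularMul C r) (hdual : IsDualBasis C D τ)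
    (a b : A) {l : Λ} (S' S : M l) : r (a * b) l S' S = ∑ S'', r a l S' S'' * r b l S'' S := by
  have hlower := trace_mul_dual_eq_zero hdual (mul_mem_lowerCells hC a (hC b l S S)) S S'
  rw [mul_sub, sub_mul, map_sub, sub_eq_zero, Finset.mul_sum, Finset.sum_mul, map_sum] at hlower
  calc r (a * b) l S' S = τ (a * (b * C l S S) * D l S S') := by
        rw [← trace_mul_cell_mul_dual hC hdual, mul_assoc, mul_assoc, mul_assoc]
    _ = _ := hlower
    _ = _ := Finset.sum_congr rfl fun S'' _ => by
        rw [mul_smul_comm, smul_mul_assoc, map_smul, mul_assoc, trace_mul_cell_mul_dual hC hdual,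
          smul_eq_mul, mul_comm]

theorem structConst_one (hC : IsCellularMul C r) (hdual : IsDualBasis C D τ)
    {l : Λ} (S' S : M l) : r 1 l S' S = if S' = S then 1 else 0 := by
  rw [← trace_mul_cell_mul_dual hC hdual 1 S S S', one_mul, hdual l l]
  simp [eq_comm]

theorem cellRep_apply (hC : IsCellularMul C r) (hdual : IsDualBasis C D τ) (a : A) (l : Λ)
    (i j : M l) : cellRep C D τ a l i j = r a l i j :=
  trace_mul_cell_mul_dual hC hdual a j i i

theorem cellRep_mul (hC : IsCellularMul C r) (hdual : IsDualBasis C D τ) (a b : A) :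
    cellRep C D τ (a * b) = cellRep C D τ a * cellRep C D τ b := by
  ext l i j
  simp only [Pi.mul_apply, Matrix.mul_apply, cellRep_apply hC hdual, structConst_mul hC hdual]

theorem cellRep_one (hC : IsCellularMul C r) (hdual : IsDualBasis C D τ) :
    cellRep C D τ 1 = 1 := by
  ext l i j
  rw [cellRep_apply hC hdual, structConst_one hC hdual, Pi.one_apply, Matrix.one_apply]

theorem mul_cell_mem_lowerCells_of_cellRep_eq_zero (hC : IsCellularMul C r)
    (hdual : IsDualBasis C D τ) {x : A} (hx : cellRep C D τ x = 0) (l : Λ) (S T : M l) :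
    x * C l S T ∈ lowerCells R C l := by
  have hr : ∀ S', r x l S' S = 0 := fun S' => by
    rw [← cellRep_apply hC hdual, hx, Pi.zero_apply, Matrix.zero_apply]
  simpa [hr] using hC x l S T

end CommRing

variable [Field R] [Algebra R A] [∀ l, Fintype (M l)] [DecidableEq Λ]
  [∀ l, DecidableEq (M l)] {C D : ∀ l, M l → M l → A} {τ : A →ₗ[R] R}

theorem span_eq_top_iff_injective_cellRep [Finite Λ] (bC : Basis ((l : Λ) × (M l × M l)) R A)
    (hbC : ∀ l S T, bC ⟨l, (S, T)⟩ = C l S T) (hdual : IsDualBasis C D τ) :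
    span R (Set.range fun t : (l : Λ) × (M l × M l) => C t.1 t.2.1 t.2.2 * D t.1 t.2.2 t.2.2) = ⊤
      ↔ Function.Injective (cellRep C D τ) := by
  have := Module.Finite.of_basis bC
  rw [span_range_eq_top_iff_of_separatingLeft (separatingLeft_traceForm bC hbC hdual),
    injective_iff_map_eq_zero]
  exact forall_congr' fun x => imp_congr_left cellRep_eq_zero_iff.symm

theorem isSemisimpleRing_iff_injective_cellRep [Preorder Λ] [Fintype Λ]
    {r : A → ∀ l, M l → M l → R} (bC : Basis ((l : Λ) × (M l × M l)) R A)
    (hbC : ∀ l S T, bC ⟨l, (S, T)⟩ = C l S T) (hC : IsCellularMul C r) (hdual : IsDualBasis C D τ) :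
    IsSemisimpleRing A ↔ Function.Injective (cellRep C D τ) := by
  have := Module.Finite.of_basis bC
  refine ⟨fun _ => (injective_iff_map_eq_zero _).2 fun x hx => ?_, fun hinj => ?_⟩
  · have hspan : span R (Set.range fun t : (l : Λ) × (M l × M l) => C t.1 t.2.1 t.2.2) = ⊤ := by
      rw [← bC.span_eq, show ⇑bC = _ from funext fun t => hbC t.1 t.2.1 t.2.2]
    refine eq_zero_of_forall_isNilpotent_mul_left fun y => isNilpotent_of_mul_cell_mem_lowerCells
      hspan (mul_cell_mem_lowerCells_of_cellRep_eq_zero hC hdual ?_)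
    rw [cellRep_mul hC hdual, hx, mul_zero]
  · have hdim : finrank R A = finrank R (∀ l, Matrix (M l) (M l) R) := by
      simp [finrank_eq_card_basis bC, Module.finrank_pi_fintype, Module.finrank_matrix]
    exact IsSemisimpleRing.of_injective_algHom (AlgHom.ofLinearMap (cellRep C D τ)
      (cellRep_one hC hdual) (cellRep_mul hC hdual)) hinj hdim

end CellularAlgebra

open CellularAlgebra

theorem semisimple_iff_CD_basis_general
    {R A : Type*} [Field R] [Ring A] [Algebra R A]
    {Λ : Type*} [PartialOrder Λ] [Fintype Λ] [DecidableEq Λ]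
    {M : Λ → Type*} [∀ l, Fintype (M l)] [∀ l, DecidableEq (M l)]
    (C D : ∀ l, M l → M l → A)
    (bC : Module.Basis ((l : Λ) × (M l × M l)) R A)
    (hbC : ∀ l S T, bC ⟨l, (S, T)⟩ = C l S T)
    (r : A → ∀ l, M l → M l → R)
    (hC3 : ∀ (a : A) l (S T : M l), a * C l S T - ∑ S', r a l S' S • C l S' T ∈
      Submodule.span R {x | ∃ m, ∃ U V : M m, m < l ∧ x = C m U V})
    (τ : A →ₗ[R] R)
    (hdual : ∀ l m (S T : M l) (U V : M m),
      τ (C l S T * D m U V) =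
        if (⟨l, (S, T)⟩ : (l : Λ) × (M l × M l)) = ⟨m, (V, U)⟩ then 1 else 0)
     :
    IsSemisimpleRing A ↔
      (LinearIndependent R
          (fun t : (l : Λ) × (M l × M l) => C t.1 t.2.1 t.2.2 * D t.1 t.2.2 t.2.2) ∧
        Submodule.span R
          (Set.range fun t : (l : Λ) × (M l × M l) =>
            C t.1 t.2.1 t.2.2 * D t.1 t.2.2 t.2.2) = ⊤) := by
  rw [isSemisimpleRing_iff_injective_cellRep bC hbC hC3 hdual,
    ← span_eq_top_iff_injective_cellRep bC hbC hdual]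
  have := Module.Finite.of_basis bC
  exact ⟨fun h => ⟨linearIndependent_of_top_le_span_of_card_eq_finrank h.ge
    (finrank_eq_card_basis bC).symm, h⟩, And.right⟩

/-- Corollary 5.1(1)⟺(3): a finite-dimensional symmetric cellular algebra over a field
is semisimple iff `{C l S T * D l T T}` is a basis of `A`. -/
theorem semisimple_iff_CD_basis
    {R A : Type*} [Field R] [Ring A] [Algebra R A]
    {Λ : Type*} [PartialOrder Λ] [Fintype Λ] [DecidableEq Λ]
    {M : Λ → Type*} [∀ l, Fintype (M l)] [∀ l, DecidableEq (M l)]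
    (C D : ∀ l, M l → M l → A)
    (bC : Module.Basis ((l : Λ) × (M l × M l)) R A)
    (hbC : ∀ l S T, bC ⟨l, (S, T)⟩ = C l S T)
    (ι : A →ₗ[R] A)
    (hι2 : ∀ x, ι (ι x) = x)
    (hιmul : ∀ x y, ι (x * y) = ι y * ι x)
    (hC2 : ∀ l (S T : M l), ι (C l S T) - C l T S ∈
      Submodule.span R {x | ∃ m, ∃ U V : M m, m < l ∧ x = C m U V})
    (r : A → ∀ l, M l → M l → R)
    (hC3 : ∀ (a : A) l (S T : M l), a * C l S T - ∑ S', r a l S' S • C l S' T ∈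
      Submodule.span R {x | ∃ m, ∃ U V : M m, m < l ∧ x = C m U V})
    (τ : A →ₗ[R] R)
    (hτtr : ∀ x y, τ (x * y) = τ (y * x))
    (bD : Module.Basis ((l : Λ) × (M l × M l)) R A)
    (hbD : ∀ l S T, bD ⟨l, (S, T)⟩ = D l S T)
    (hdual : ∀ l m (S T : M l) (U V : M m),
      τ (C l S T * D m U V) =
        if (⟨l, (S, T)⟩ : (l : Λ) × (M l × M l)) = ⟨m, (V, U)⟩ then 1 else 0)
     :
    IsSemisimpleRing A ↔
      (LinearIndependent R
          (fun t : (l : Λ) × (M l × M l) => C t.1 t.2.1 t.2.2 * D t.1 t.2.2 t.2.2) ∧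
        Submodule.span R
          (Set.range fun t : (l : Λ) × (M l × M l) =>
            C t.1 t.2.1 t.2.2 * D t.1 t.2.2 t.2.2) = ⊤) :=
  semisimple_iff_CD_basis_general C D bC hbC r hC3 τ hdual
end
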